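/- arXiv:1807.09310 — 7 statements merged into one kernel-verified Lean document; each statement's English description precedes it below -/
import Mathlib

section
/- Let S be a subset of the n×n matrices over a field F such that every matrix in the F-linear span of S has minimal polynomial of degree at most 2. Then the length of S is at most 2·log₂(n), i.e., the F-linear span of words in S of length at most 2·log₂(n) equals the subalgebra generated by S. -/
/-- Words in `S` of length at most `k` (the empty word gives the identity). -/
def wordsLe {F : Type*} [Field F] {m : Type*} [Fintype m] [DecidableEq m]
    (S : Set (Matrix m m F)) (k : ℕ) : Set (Matrix m m F) :=
  {M | ∃ l : List (Matrix m m F), l.length ≤ k ∧ (∀ a ∈ l, a ∈ S) ∧ M = l.prod}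

/-- The length of a generating set: the least `k` such that the span of words of
length at most `k` equals the unital subalgebra generated by `S`. -/
noncomputable def matLen (F : Type*) [Field F] {m : Type*} [Fintype m] [DecidableEq m]
    (S : Set (Matrix m m F)) : ℕ :=
  sInf {k | Submodule.span F (wordsLe S k) = Subalgebra.toSubmodule (Algebra.adjoin F S)}

/-! Write `L_k` for the span of the words of length at most `k`. Every `a ∈ span S` has
`a² ∈ span {1, a}`, so squares and anticommutators `ab + ba` of letters lie in `L_1`. Hence,
modulo `L_{k-1}`, a word of length `k` is a nonzero multiple of each of its rearrangements,
and it lies in `L_{k-1}` if a letter repeats. If `ℓ = ℓ(S) ≥ 1`, this gives a product `w_T`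
of `ℓ` distinct letters `T ⊆ S` with `w_T ∉ L_{ℓ-1}`. The products `w_U`, `U ⊆ T`, are then
linearly independent: multiplying a relation on the right by `w_{T \ U₀}`, for `U₀` of
maximal size in its support, leaves `w_T ∈ L_{ℓ-1}` up to a nonzero scalar. Hence
`2 ^ ℓ ≤ n ^ 2`. -/

open Submodule Polynomial

section

variable {F A : Type*} [Field F] [Ring A] [Algebra F A]

variable (F) in
/-- For a set of matrices, `wordSpan F S k` is `span F (wordsLe S k)` by definition. -/
def wordSpan (s : Set A) (k : ℕ) : Submodule F A :=
  span F {M | ∃ l : List A, l.length ≤ k ∧ (∀ a ∈ l, a ∈ s) ∧ M = l.prod}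

section wordSpan

variable {s : Set A}

theorem prod_mem_wordSpan {l : List A} (hl : ∀ a ∈ l, a ∈ s) {k : ℕ} (hk : l.length ≤ k) :
    l.prod ∈ wordSpan F s k :=
  subset_span ⟨l, hk, hl, rfl⟩

theorem one_mem_wordSpan (k : ℕ) : (1 : A) ∈ wordSpan F s k :=
  prod_mem_wordSpan (l := []) (by simp) (Nat.zero_le k)

theorem mem_wordSpan_one {a : A} (ha : a ∈ s) : a ∈ wordSpan F s 1 := by
  simpa using prod_mem_wordSpan (F := F) (l := [a]) (by simpa using ha) le_rfl

theorem wordSpan_mono : Monotone (wordSpan F s) := fun _ _ hjk =>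
  span_mono fun _ ⟨l, hl, hmem, hM⟩ => ⟨l, hl.trans hjk, hmem, hM⟩

theorem wordSpan_mul_wordSpan_le (j k : ℕ) :
    wordSpan F s j * wordSpan F s k ≤ wordSpan F s (j + k) := by
  rw [wordSpan, wordSpan, span_mul_span, span_le]
  rintro _ ⟨_, ⟨l, hl, hmem, rfl⟩, _, ⟨l', hl', hmem', rfl⟩, rfl⟩
  show l.prod * l'.prod ∈ _
  rw [← List.prod_append]
  refine prod_mem_wordSpan (fun a ha => ?_) (by simpa using add_le_add hl hl')
  exact (List.mem_append.1 ha).elim (hmem a) (hmem' a)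

theorem mul_mem_wordSpan {a b : A} {j k : ℕ} (ha : a ∈ wordSpan F s j)
    (hb : b ∈ wordSpan F s k) : a * b ∈ wordSpan F s (j + k) :=
  wordSpan_mul_wordSpan_le j k (mul_mem_mul ha hb)

theorem span_le_wordSpan_one : span F s ≤ wordSpan F s 1 :=
  span_le.2 fun _ => mem_wordSpan_one

end wordSpan

theorem mul_self_mem_span_one_self {a : A} (ha : IsIntegral F a)
    (h : (minpoly F a).natDegree ≤ 2) : a * a ∈ span F {1, a} := by
  set r := X ^ 2 %ₘ minpoly F a
  have hr : r.degree ≤ 1 := by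
    have := degree_modByMonic_lt (X ^ 2) (minpoly.monic ha)
    exact Order.le_of_lt_succ (this.trans_le (degree_le_of_natDegree_le h))
  have haa : a * a = aeval a r := by
    rw [aeval_modByMonic_eq_self_of_root (minpoly.aeval F a), map_pow, aeval_X, sq]
  rw [haa, eq_X_add_C_of_degree_le_one hr]
  simp only [map_add, map_mul, aeval_C, aeval_X, Algebra.algebraMap_eq_smul_one, smul_mul_assoc,
    one_mul]
  exact add_mem (smul_mem _ _ (subset_span (by simp))) (smul_mem _ _ (subset_span (by simp)))

section Quadratic

variable {s : Set A}
  (hac : ∀ a ∈ s, ∀ b ∈ s, a * b + b * a ∈ wordSpan F s 1)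
  (hsq : ∀ a ∈ s, a * a ∈ wordSpan F s 1)

include hac in
theorem exists_prod_sub_smul_prod_mem_of_perm {l l' : List A} (hl : ∀ a ∈ l, a ∈ s)
    (h : l.Perm l') :
    ∃ c : F, c ≠ 0 ∧ l.prod - c • l'.prod ∈ wordSpan F s (l.length - 1) := by
  induction h with
  | nil => exact ⟨1, one_ne_zero, by simp⟩
  | @cons a l₁ l₂ h ih =>
    rcases l₁ with _ | ⟨b, l₁⟩
    -- `[a].length - 1 = 0`: the induction hypothesis cannot be multiplied by `a` here.
    · exact ⟨1, one_ne_zero, by simp [← h.nil_eq]⟩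
    · obtain ⟨c, hc, hmem⟩ := ih fun b hb => hl b (.tail a hb)
      refine ⟨c, hc, ?_⟩
      have := mul_mem_wordSpan (mem_wordSpan_one (hl a (.head _))) hmem
      simpa [mul_sub, mul_smul_comm, add_comm] using this
  | swap a b l =>
    refine ⟨-1, by simp, ?_⟩
    have := mul_mem_wordSpan (hac b (hl b (by simp)) a (hl a (by simp)))
      (prod_mem_wordSpan (F := F) (l := l) (fun c hc => hl c (by simp [hc])) le_rfl)
    simpa [← mul_assoc, add_mul, add_comm] using this
  | @trans l₁ l₂ l₃ h₁₂ _ ih₁₂ ih₂₃ =>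
    obtain ⟨c, hc, hmem⟩ := ih₁₂ hl
    obtain ⟨d, hd, hmem'⟩ := ih₂₃ fun a ha => hl a (h₁₂.symm.subset ha)
    refine ⟨c * d, mul_ne_zero hc hd, ?_⟩
    rw [← h₁₂.length_eq] at hmem'
    have := add_mem hmem (smul_mem _ c hmem')
    rwa [smul_sub, smul_smul, sub_add_sub_cancel] at this

include hac hsq in
theorem prod_mem_wordSpan_of_not_nodup {l : List A} (hl : ∀ a ∈ l, a ∈ s) (h : ¬ l.Nodup) :
    l.prod ∈ wordSpan F s (l.length - 1) := by
  obtain ⟨a, hdup⟩ : ∃ a, List.Duplicate a l := by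
    simpa [List.nodup_iff_forall_not_duplicate] using h
  obtain ⟨r, hr⟩ := (List.duplicate_iff_sublist.1 hdup).exists_perm_append
  obtain ⟨c, -, hc⟩ := exists_prod_sub_smul_prod_mem_of_perm hac hl hr
  have ha : a ∈ s := hl a hdup.mem
  have hr_mem : ∀ b ∈ r, b ∈ s := fun b hb => hl b (hr.symm.subset (by simp [hb]))
  have hfront : ([a, a] ++ r).prod ∈ wordSpan F s (l.length - 1) := by
    have := mul_mem_wordSpan (hsq a ha) (prod_mem_wordSpan (F := F) hr_mem le_rfl)
    simpa [hr.length_eq, ← mul_assoc, add_comm] using this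
  simpa using add_mem hc (smul_mem _ c hfront)

variable [DecidableEq A] {T : Finset A}

include hac in
theorem exists_prod_mul_prod_sdiff_sub_smul_mem {U : Finset A} (hT : ↑T ⊆ s) (hUT : U ⊆ T) :
    ∃ c : F, c ≠ 0 ∧ U.toList.prod * (T \ U).toList.prod - c • T.toList.prod ∈
      wordSpan F s (T.card - 1) := by
  have hperm : (U.toList ++ (T \ U).toList).Perm T.toList := by
    refine List.perm_of_nodup_nodup_toFinset_eq ?_ T.nodup_toList ?_
    · refine List.nodup_append.2 ⟨U.nodup_toList, (T \ U).nodup_toList, ?_⟩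
      simp only [Finset.mem_toList, Finset.mem_sdiff]
      exact fun a ha b hb hab => hb.2 (hab ▸ ha)
    · simp [Finset.union_sdiff_of_subset hUT]
  simpa [hperm.length_eq] using exists_prod_sub_smul_prod_mem_of_perm hac
    (fun a ha => hT (by simpa using hperm.subset ha)) hperm

include hac hsq in
theorem prod_mul_prod_sdiff_mem {U V : Finset A}
    (hT : ↑T ⊆ s) (hUT : U ⊆ T) (hVT : V ⊆ T) (hVU : V ≠ U) (hcard : V.card ≤ U.card) :
    V.toList.prod * (T \ U).toList.prod ∈ wordSpan F s (T.card - 1) := by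
  set l := V.toList ++ (T \ U).toList
  have hl : ∀ a ∈ l, a ∈ s := fun a ha => hT (by aesop)
  have hlen : l.length = V.card + (T.card - U.card) := by
    simp [l, Finset.card_sdiff_of_subset hUT]
  have hUcard := Finset.card_le_card hUT
  rw [← List.prod_append]
  by_cases hVU' : V ⊆ U
  · have := Finset.card_lt_card (hVU'.ssubset_of_ne hVU)
    exact prod_mem_wordSpan hl (by omega)
  · obtain ⟨a, haV, haU⟩ := Finset.not_subset.1 hVU'
    have hnd : ¬ l.Nodup := fun hnd => (List.nodup_append.1 hnd).2.2 a (by simpa using haV) a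
      (by simpa using ⟨hVT haV, haU⟩) rfl
    exact wordSpan_mono (show l.length - 1 ≤ T.card - 1 by omega)
      (prod_mem_wordSpan_of_not_nodup hac hsq hl hnd)

include hac hsq in
theorem linearIndependent_prod_toList_powerset (hT : ↑T ⊆ s)
    (hTw : T.toList.prod ∉ wordSpan F s (T.card - 1)) :
    LinearIndependent F fun U : T.powerset => U.1.toList.prod := by
  classical
  rw [Fintype.linearIndependent_iff]
  intro g hg
  by_contra! hne
  obtain ⟨U₀, hU₀, hmax⟩ := Finset.exists_max_image
    (Finset.univ.filter fun U => g U ≠ 0) (fun U => U.1.card)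
    (by simpa [Finset.filter_nonempty_iff] using hne)
  have hU₀T := Finset.mem_powerset.1 U₀.2
  obtain ⟨c, hc, hmain⟩ := exists_prod_mul_prod_sdiff_sub_smul_mem hac hT hU₀T
  set R := (T \ U₀.1).toList.prod
  have hrest : ∑ U ∈ Finset.univ.erase U₀, g U • (U.1.toList.prod * R) ∈
      wordSpan F s (T.card - 1) := by
    refine sum_mem fun U hU => ?_
    by_cases hgU : g U = 0
    · simp [hgU]
    refine smul_mem _ _ (prod_mul_prod_sdiff_mem hac hsq hT hU₀T (Finset.mem_powerset.1 U.2)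
      (Subtype.coe_ne_coe.2 (Finset.ne_of_mem_erase hU)) (hmax U (by simpa using hgU)))
  have hrel : g U₀ • (U₀.1.toList.prod * R) + ∑ U ∈ Finset.univ.erase U₀,
      g U • (U.1.toList.prod * R) = 0 := by
    rw [Finset.add_sum_erase (f := fun U => g U • (U.1.toList.prod * R)) _
      (Finset.mem_univ U₀)]
    simpa [Finset.sum_mul, smul_mul_assoc] using congrArg (· * R) hg
  have : (g U₀ * c) • T.toList.prod ∈ wordSpan F s (T.card - 1) := by
    have hsplit : (g U₀ * c) • T.toList.prod = g U₀ • (U₀.1.toList.prod * R) -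
        g U₀ • (U₀.1.toList.prod * R - c • T.toList.prod) := by
      rw [smul_sub, smul_smul, sub_sub_cancel]
    rw [hsplit, eq_neg_of_add_eq_zero_left hrel]
    exact sub_mem (neg_mem hrest) (smul_mem _ _ hmain)
  exact hTw ((smul_mem_iff _ (mul_ne_zero (by simpa using hU₀) hc)).1 this)

include hac hsq in
theorem exists_finset_card_eq_prod_toList_notMem {k : ℕ}
    (h : ¬ wordSpan F s (k + 1) ≤ wordSpan F s k) :
    ∃ T : Finset A, ↑T ⊆ s ∧ T.card = k + 1 ∧ T.toList.prod ∉ wordSpan F s k := by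
  by_contra! hT
  refine h (span_le.2 ?_)
  rintro _ ⟨l, hlen, hl, rfl⟩
  rcases hlen.lt_or_eq with hlt | hlen
  · exact prod_mem_wordSpan hl (by omega)
  by_cases hnd : l.Nodup
  · obtain ⟨c, -, hc⟩ :=
      exists_prod_sub_smul_prod_mem_of_perm hac hl (List.toFinset_toList hnd).symm
    have hTw := hT l.toFinset (by simpa [Set.subset_def] using hl)
      (by rw [List.toFinset_card_of_nodup hnd, hlen])
    rw [hlen, Nat.add_sub_cancel] at hc
    simpa using add_mem hc (smul_mem _ c hTw)
  · simpa [hlen] using prod_mem_wordSpan_of_not_nodup hac hsq hl hnd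

include hac hsq in
theorem two_pow_le_finrank_of_not_wordSpan_le [FiniteDimensional F A] {k : ℕ}
    (h : ¬ wordSpan F s (k + 1) ≤ wordSpan F s k) : 2 ^ (k + 1) ≤ Module.finrank F A := by
  obtain ⟨T, hT, hcard, hTw⟩ := exists_finset_card_eq_prod_toList_notMem hac hsq h
  have hind := linearIndependent_prod_toList_powerset hac hsq hT (by rwa [hcard])
  simpa [hcard] using hind.fintype_card_le_finrank

end Quadratic

section MinpolyDegreeTwo

variable [FiniteDimensional F A] {s : Set A}
  (hs : ∀ a ∈ span F s, (minpoly F a).natDegree ≤ 2)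

include hs in
theorem mul_self_mem_wordSpan_one {a : A} (ha : a ∈ span F s) : a * a ∈ wordSpan F s 1 := by
  refine span_le.2 ?_ (mul_self_mem_span_one_self (Algebra.IsIntegral.isIntegral a) (hs a ha))
  simp [Set.insert_subset_iff, one_mem_wordSpan, span_le_wordSpan_one ha]

include hs in
theorem mul_add_mul_mem_wordSpan_one {a b : A} (ha : a ∈ span F s) (hb : b ∈ span F s) :
    a * b + b * a ∈ wordSpan F s 1 := by
  have := sub_mem (sub_mem (mul_self_mem_wordSpan_one hs (add_mem ha hb))
    (mul_self_mem_wordSpan_one hs ha)) (mul_self_mem_wordSpan_one hs hb)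
  convert this using 1
  noncomm_ring

end MinpolyDegreeTwo

theorem not_wordSpan_succ_le_of_matLen_eq {m : Type*} [Fintype m] [DecidableEq m]
    {S : Set (Matrix m m F)} {k : ℕ} (h : matLen F S = k + 1) :
    ¬ wordSpan F S (k + 1) ≤ wordSpan F S k := by
  set K := {k | span F (wordsLe S k) = Subalgebra.toSubmodule (Algebra.adjoin F S)}
  have hK : K.Nonempty := by
    by_contra hK
    simp [matLen, K, Set.not_nonempty_iff_eq_empty.1 hK] at h
  have hsucc : wordSpan F S (k + 1) = Subalgebra.toSubmodule (Algebra.adjoin F S) :=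
    h ▸ Nat.sInf_mem hK
  have hk : wordSpan F S k ≠ Subalgebra.toSubmodule (Algebra.adjoin F S) :=
    Nat.notMem_of_lt_sInf (s := K) (show k < matLen F S by omega)
  exact fun hle => hk ((le_antisymm (wordSpan_mono k.le_succ) hle).trans hsucc)

end

theorem natCast_le_two_mul_logb_two {l n : ℕ} (h : 2 ^ l ≤ n ^ 2) :
    (l : ℝ) ≤ 2 * Real.logb 2 n := by
  have hpos : (0 : ℝ) < n ^ 2 := by exact_mod_cast (Nat.two_pow_pos l).trans_le h
  calc (l : ℝ) ≤ Real.logb 2 ((n : ℝ) ^ 2) :=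
        (Real.le_logb_iff_rpow_le one_lt_two hpos).2 (by exact_mod_cast h)
    _ = 2 * Real.logb 2 n := by simp [Real.logb_pow]

theorem stmt_0 {F : Type*} [Field F] {n : ℕ} (S : Set (Matrix (Fin n) (Fin n) F))
    (h : ∀ A ∈ Submodule.span F S, (minpoly F A).natDegree ≤ 2) :
    (matLen F S : ℝ) ≤ 2 * Real.logb 2 n := by
  classical
  cases hk : matLen F S with
  | zero =>
    have := Real.log_natCast_nonneg n
    simp only [CharP.cast_eq_zero, Real.logb]
    positivity
  | succ k =>
    have hsq a (ha : a ∈ S) := mul_self_mem_wordSpan_one h (subset_span ha)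
    have hac a (ha : a ∈ S) b (hb : b ∈ S) :=
      mul_add_mul_mem_wordSpan_one h (subset_span ha) (subset_span hb)
    have hfin :=
      two_pow_le_finrank_of_not_wordSpan_le hac hsq (not_wordSpan_succ_le_of_matLen_eq hk)
    rw [Module.finrank_matrix, Fintype.card_fin, Module.finrank_self, mul_one, ← sq] at hfin
    exact natCast_le_two_mul_logb_two hfin
end

section
/- Let A be an n×n matrix over an algebraically closed field F with invariant factors f₁ | f₂ | ⋯ | f_k and minimal polynomial φ = f_k. Let ψ be a polynomial of degree deg(φ) − 1 that divides φ and is divisible by f_{k−1} (when k ≥ 2). Then ψ(A) is nonzero and rank(ψ(A)) ≤ n / deg(φ). -/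
/-- The companion matrix of a polynomial `f = t^m + c_{m-1} t^{m-1} + … + c_0`:
subdiagonal ones, last column `-c_i`. -/
def companionMatrix {F : Type*} [Field F] (f : Polynomial F) :
    Matrix (Fin f.natDegree) (Fin f.natDegree) F := fun i j =>
  (if (i : ℕ) = (j : ℕ) + 1 then 1 else 0) +
    (if (j : ℕ) = f.natDegree - 1 then -(f.coeff i) else 0)

/-!
The companion matrix of a monic `f` is the matrix of multiplication by `X` on `F[X]/(f)` in the
basis `1, X, …, X ^ (deg f - 1)`, so `ψ` evaluated at it is multiplication by `ψ`. This vanishes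
on each block `F[X]/(fᵢ)` with `fᵢ ∣ ψ`. On the last block, `φ = ψ q` with `q` linear with root
`a`, so `ψ X ^ j ≡ a ^ j ψ` modulo `φ` and the block has rank at most one. Hence
`rank ψ(A) ≤ 1 ≤ n / deg φ`, while `ψ(A) ≠ 0` because `deg ψ < deg φ = deg (minpoly A)`.
-/

open Polynomial Matrix

theorem Polynomial.exists_dvd_mul_X_sub_C {K : Type*} [Field K] {f ψ : K[X]} (hf : f ≠ 0)
    (hψ : ψ ∣ f) (hdeg : ψ.natDegree + 1 = f.natDegree) : ∃ a, f ∣ ψ * (X - C a) := by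
  obtain ⟨q, rfl⟩ := hψ
  have hq : q.degree = 1 := by
    rw [natDegree_mul (left_ne_zero_of_mul hf) (right_ne_zero_of_mul hf)] at hdeg
    rw [degree_eq_natDegree (right_ne_zero_of_mul hf)]
    exact_mod_cast (by omega : q.natDegree = 1)
  obtain ⟨a, ha⟩ := exists_root_of_degree_eq_one hq
  have hassoc : Associated (X - C a) q :=
    associated_of_dvd_of_degree_eq (dvd_iff_isRoot.2 ha) (by rw [degree_X_sub_C, hq])
  exact ⟨a, mul_dvd_mul_left ψ hassoc.symm.dvd⟩

theorem PowerBasis.leftMulMatrix_eq_vecMulVec {R S : Type*} [CommRing R] [CommRing S]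
    [Algebra R S] (pb : PowerBasis R S) {x : S} {a : R} (h : x * pb.gen = a • x) :
    Algebra.leftMulMatrix pb.basis x =
      vecMulVec (pb.basis.repr x) fun j : Fin pb.dim => a ^ (j : ℕ) := by
  have hpow : ∀ j : ℕ, x * pb.gen ^ j = a ^ j • x := by
    intro j
    induction j with
    | zero => simp
    | succ j ih => rw [pow_succ, ← mul_assoc, ih, smul_mul_assoc, h, smul_smul, pow_succ]
  ext i j
  rw [Algebra.leftMulMatrix_eq_repr_mul, pb.basis_eq_pow, hpow, map_smul, vecMulVec_apply,
    Finsupp.smul_apply, smul_eq_mul, mul_comm]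

theorem Matrix.aeval_blockDiagonal' {R α o : Type*} {m' : o → Type*} [CommSemiring R]
    [Semiring α] [Algebra R α] [Fintype o] [DecidableEq o] [∀ i, Fintype (m' i)]
    [∀ i, DecidableEq (m' i)] (M : ∀ i, Matrix (m' i) (m' i) α) (p : R[X]) :
    aeval (blockDiagonal' M) p = blockDiagonal' fun i => aeval (M i) p := by
  induction p using Polynomial.induction_on' with
  | add p q hp hq => simp only [map_add, hp, hq, ← blockDiagonal'_add, Pi.add_def]
  | monomial n r =>
    simp only [aeval_monomial, ← Algebra.smul_def, ← blockDiagonal'_pow,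
      ← blockDiagonal'_smul]
    rfl

theorem Matrix.rank_blockDiagonal'_single_le {R o : Type*} {m' : o → Type*} [CommRing R]
    [StrongRankCondition R] [Fintype o] [DecidableEq o] [∀ i, Fintype (m' i)]
    [∀ i, DecidableEq (m' i)] (i : o) (N : Matrix (m' i) (m' i) R) :
    (blockDiagonal' (Pi.single i N)).rank ≤ N.rank := by
  have h : blockDiagonal' (Pi.single i N) =
      (of fun p y => (1 : Matrix (Σ j, m' j) (Σ j, m' j) R) p ⟨i, y⟩) * N *
        of fun y q => (1 : Matrix (Σ j, m' j) (Σ j, m' j) R) ⟨i, y⟩ q := by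
    ext ⟨j, x⟩ ⟨j', x'⟩
    rcases eq_or_ne j i with rfl | hj
    · rcases eq_or_ne j' j with rfl | hj'
      · simp [mul_apply, one_apply]
      · simp [mul_apply, one_apply, blockDiagonal'_apply_ne _ _ _ hj'.symm, hj'.symm]
    · simp [mul_apply, one_apply, blockDiagonal'_apply, hj]
  rw [h]
  exact (rank_mul_le_left _ _).trans (rank_mul_le_right _ _)

theorem aeval_units_conj {R A : Type*} [CommSemiring R] [Ring A] [Algebra R A]
    (u : Aˣ) (x : A) (p : R[X]) :
    aeval (↑u * x * ↑u⁻¹ : A) p = ↑u * aeval x p * ↑u⁻¹ := by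
  simpa [ConjAct.units_smul_def] using
    aeval_algHom_apply (MulSemiringAction.toAlgEquiv R A (ConjAct.toConjAct u)).toAlgHom x p

theorem Matrix.rank_aeval_conj_submatrix {K m n : Type*} [Field K] [Fintype m] [DecidableEq m]
    [Fintype n] [DecidableEq n] (Q : Matrix n n K) (hQ : IsUnit Q.det) (e : m ≃ n)
    (B : Matrix m m K) (p : K[X]) :
    (aeval (Q * B.submatrix e.symm e.symm * Q⁻¹) p).rank = (aeval B p).rank := by
  have hsub : aeval (B.submatrix e.symm e.symm) p = (aeval B p).submatrix e.symm e.symm :=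
    aeval_algHom_apply (reindexAlgEquiv K K e).toAlgHom B p
  have hconj : aeval (Q * B.submatrix e.symm e.symm * Q⁻¹) p =
      Q * (aeval B p).submatrix e.symm e.symm * Q⁻¹ := by
    rw [← hsub]
    exact aeval_units_conj (nonsingInvUnit Q hQ) _ p
  rw [hconj, rank_mul_eq_left_of_isUnit_det _ _ (isUnit_nonsing_inv_det Q hQ),
    rank_mul_eq_right_of_isUnit_det _ _ hQ, rank_submatrix]

section Companion

variable {F : Type*} [Field F] {f : F[X]}

theorem companionMatrix_eq_leftMulMatrix (hf : f.Monic) :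
    companionMatrix f =
      Algebra.leftMulMatrix (AdjoinRoot.powerBasis' hf).basis (AdjoinRoot.root f) := by
  have h := (AdjoinRoot.powerBasis' hf).leftMulMatrix
  rw [PowerBasis.minpolyGen_eq, AdjoinRoot.powerBasis'_gen, AdjoinRoot.minpoly_root hf.ne_zero,
    hf.leadingCoeff, inv_one, C_1, mul_one] at h
  rw [h]
  ext i j
  change companionMatrix f i j =
    if (j : ℕ) + 1 = f.natDegree then -f.coeff i else if (i : ℕ) = j + 1 then 1 else 0
  unfold companionMatrix
  have := j.isLt
  split_ifs <;> first | omega | simp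

theorem aeval_companionMatrix (hf : f.Monic) (p : F[X]) :
    aeval (companionMatrix f) p =
      Algebra.leftMulMatrix (AdjoinRoot.powerBasis' hf).basis (AdjoinRoot.mk f p) := by
  rw [companionMatrix_eq_leftMulMatrix hf, ← AdjoinRoot.aeval_eq]
  exact aeval_algHom_apply _ _ _

theorem aeval_companionMatrix_eq_zero_of_dvd (hf : f.Monic) {p : F[X]} (hp : f ∣ p) :
    aeval (companionMatrix f) p = 0 := by
  rw [aeval_companionMatrix hf, AdjoinRoot.mk_eq_zero.2 hp, map_zero]
  rfl

theorem rank_aeval_companionMatrix_le_one (hf : f.Monic) {ψ : F[X]} (hψ : ψ ∣ f)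
    (hdeg : ψ.natDegree + 1 = f.natDegree) : (aeval (companionMatrix f) ψ).rank ≤ 1 := by
  obtain ⟨a, ha⟩ := exists_dvd_mul_X_sub_C hf.ne_zero hψ hdeg
  have hgen : AdjoinRoot.mk f ψ * (AdjoinRoot.powerBasis' hf).gen = a • AdjoinRoot.mk f ψ := by
    have h := AdjoinRoot.mk_eq_zero.2 ha
    rw [map_mul, map_sub, AdjoinRoot.mk_X, AdjoinRoot.mk_C, mul_sub, sub_eq_zero] at h
    rw [AdjoinRoot.powerBasis'_gen, h, Algebra.smul_def, mul_comm]
    rfl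
  rw [aeval_companionMatrix hf, (AdjoinRoot.powerBasis' hf).leftMulMatrix_eq_vecMulVec hgen]
  exact rank_vecMulVec_le _ _

end Companion

theorem stmt_2_general {F : Type*} [Field F] {n k : ℕ}
    (A : Matrix (Fin n) (Fin n) F)
    (f : Fin (k + 1) → Polynomial F)
    (hmonic : ∀ i, (f i).Monic)
    (e : (Σ i : Fin (k + 1), Fin (f i).natDegree) ≃ Fin n)
    (Q : Matrix (Fin n) (Fin n) F) (hQ : IsUnit Q.det)
    (hA : A = Q * ((Matrix.blockDiagonal' fun i => companionMatrix (f i)).submatrix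
        e.symm e.symm) * Q⁻¹)
    (hmin : minpoly F A = f (Fin.last k))
    (ψ : Polynomial F)
    (hψdeg : ψ.natDegree + 1 = (f (Fin.last k)).natDegree)
    (hψdvd : ψ ∣ f (Fin.last k))
    (hψmul : ∀ i, i ≠ Fin.last k → f i ∣ ψ) :
    Polynomial.aeval A ψ ≠ 0 ∧
      (Polynomial.aeval A ψ).rank * (f (Fin.last k)).natDegree ≤ n := by
  set φ := f (Fin.last k)
  refine ⟨fun h => ?_, ?_⟩
  · have := natDegree_le_of_dvd (hmin ▸ minpoly.dvd F A h)
      (ne_zero_of_dvd_ne_zero (hmonic _).ne_zero hψdvd)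
    omega
  have hblocks : (fun i => aeval (companionMatrix (f i)) ψ) =
      Pi.single (Fin.last k) (aeval (companionMatrix φ) ψ) := by
    funext i
    rcases eq_or_ne i (Fin.last k) with rfl | hi
    · rw [Pi.single_eq_same]
    · rw [Pi.single_eq_of_ne hi, aeval_companionMatrix_eq_zero_of_dvd (hmonic i) (hψmul i hi)]
  have hrank : (aeval A ψ).rank ≤ 1 := calc
    (aeval A ψ).rank =
        (blockDiagonal' (Pi.single (Fin.last k) (aeval (companionMatrix φ) ψ))).rank := by
      rw [hA, rank_aeval_conj_submatrix Q hQ, aeval_blockDiagonal', hblocks]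
    _ ≤ (aeval (companionMatrix φ) ψ).rank := rank_blockDiagonal'_single_le _ _
    _ ≤ 1 := rank_aeval_companionMatrix_le_one (hmonic _) hψdvd hψdeg
  have hφn : φ.natDegree ≤ n := by
    have hcard := Fintype.card_congr e
    simp only [Fintype.card_sigma, Fintype.card_fin] at hcard
    exact hcard ▸ Finset.single_le_sum (f := fun i => (f i).natDegree) (fun i _ => Nat.zero_le _)
      (Finset.mem_univ _)
  calc (aeval A ψ).rank * φ.natDegree ≤ 1 * φ.natDegree := Nat.mul_le_mul_right _ hrank
    _ ≤ n := by rwa [one_mul]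

theorem stmt_2 {F : Type*} [Field F] [IsAlgClosed F] {n k : ℕ}
    (A : Matrix (Fin n) (Fin n) F)
    (f : Fin (k + 1) → Polynomial F)
    (hmonic : ∀ i, (f i).Monic)
    (hdeg : ∀ i, 0 < (f i).natDegree)
    (hchain : ∀ i j : Fin (k + 1), i ≤ j → f i ∣ f j)
    (e : (Σ i : Fin (k + 1), Fin (f i).natDegree) ≃ Fin n)
    (Q : Matrix (Fin n) (Fin n) F) (hQ : IsUnit Q.det)
    (hA : A = Q * ((Matrix.blockDiagonal' fun i => companionMatrix (f i)).submatrix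
        e.symm e.symm) * Q⁻¹)
    (hmin : minpoly F A = f (Fin.last k))
    (ψ : Polynomial F)
    (hψdeg : ψ.natDegree + 1 = (f (Fin.last k)).natDegree)
    (hψdvd : ψ ∣ f (Fin.last k))
    (hψmul : ∀ i, i ≠ Fin.last k → f i ∣ ψ) :
    Polynomial.aeval A ψ ≠ 0 ∧
      (Polynomial.aeval A ψ).rank * (f (Fin.last k)).natDegree ≤ n :=
  stmt_2_general A f hmonic e Q hQ hA hmin ψ hψdeg hψdvd hψmul
end

section
/- Let S be an irreducible subset of Mat_n(F) over an algebraically closed field F (i.e., S generates Mat_n(F) as an F-algebra), with n ≥ 2. Then there exist positive integers λ and ρ with λ·ρ ≤ 2n such that the F-linear span of words in S of length at most λ contains a nonzero square-zero matrix of rank ρ. -/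
/-!
Pick `A ∈ S` that is not a scalar; its minimal polynomial `p` splits and has degree `D ≥ 2`.
For a root `b` of `p` put `q_b = p /ₘ (X - C b)`. Telescoping the Frobenius rank inequality
along the factorisation `p = ∏ (X - C b)` gives `∑_b rank q_b(A) ≤ n` (roots counted with
multiplicity), so some root `b` has `D * rank q_b(A) ≤ n`, and `q_b(A)` is a combination of
words of length at most `D - 1`.

If `b` is a multiple root then `p ∣ q_b ^ 2`, so `q_b(A)` is itself square-zero. Otherwise
`X - C b` and `q_b` are coprime, and then the set of `M` with `q_b(A) * M * (A - b) = 0` is closed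
under products. Since `S` generates `Mat_n(F)`, a prime ring, some `B ∈ S` gives
`H = q_b(A) * B * (A - b) ≠ 0`; it is square-zero because `(A - b) * q_b(A) = p(A) = 0`, lies in
the span of words of length at most `D + 1`, and has rank at most `rank q_b(A)`.
-/

open Polynomial Matrix
open scoped Pointwise

section Words

variable {F : Type*} [Field F] {m : Type*} [Fintype m] [DecidableEq m] {S : Set (Matrix m m F)}

lemma wordsLe_mono {j k : ℕ} (h : j ≤ k) : wordsLe S j ⊆ wordsLe S k := by
  rintro M ⟨l, hl, hmem, rfl⟩
  exact ⟨l, hl.trans h, hmem, rfl⟩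

lemma mem_wordsLe_one {A : Matrix m m F} (hA : A ∈ S) : A ∈ wordsLe S 1 :=
  ⟨[A], by simp [hA]⟩

lemma pow_mem_wordsLe {A : Matrix m m F} (hA : A ∈ S) (k : ℕ) : A ^ k ∈ wordsLe S k :=
  ⟨List.replicate k A, List.length_replicate.le,
    fun _ ha => List.eq_of_mem_replicate ha ▸ hA, (List.prod_replicate k A).symm⟩

lemma wordsLe_mul_subset (j k : ℕ) : wordsLe S j * wordsLe S k ⊆ wordsLe S (j + k) := by
  rintro _ ⟨_, ⟨l₁, hl₁, hm₁, rfl⟩, _, ⟨l₂, hl₂, hm₂, rfl⟩, rfl⟩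
  refine ⟨l₁ ++ l₂, by simpa using add_le_add hl₁ hl₂, ?_, List.prod_append.symm⟩
  simpa only [List.mem_append, or_imp, forall_and] using ⟨hm₁, hm₂⟩

lemma mul_mem_span_wordsLe {x y : Matrix m m F} {j k : ℕ}
    (hx : x ∈ Submodule.span F (wordsLe S j)) (hy : y ∈ Submodule.span F (wordsLe S k)) :
    x * y ∈ Submodule.span F (wordsLe S (j + k)) := by
  have h := Submodule.mul_mem_mul hx hy
  rw [Submodule.span_mul_span] at h
  exact Submodule.span_mono (wordsLe_mul_subset j k) h

lemma aeval_mem_span_wordsLe {A : Matrix m m F} (hA : A ∈ S) {q : F[X]} {d : ℕ}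
    (hq : q.natDegree ≤ d) : aeval A q ∈ Submodule.span F (wordsLe S d) := by
  rw [aeval_eq_sum_range]
  refine Submodule.sum_mem _ fun i hi => Submodule.smul_mem _ _ (Submodule.subset_span ?_)
  exact wordsLe_mono (by rw [Finset.mem_range] at hi; omega) (pow_mem_wordsLe hA i)

end Words

namespace Matrix

variable {F : Type*} [Field F] {l m n o : Type*}

lemma rank_pos_of_ne_zero [Fintype n] {A : Matrix m n F} (hA : A ≠ 0) : 0 < A.rank := by
  classical
  refine Nat.pos_of_ne_zero fun h => hA ?_
  rw [rank, Submodule.finrank_eq_zero, LinearMap.range_eq_bot] at h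
  exact toLin'.injective (h.trans mulVecLin_zero.symm)

/-- Frobenius' rank inequality in the case `rank (Z * G * W) = 0`. -/
lemma rank_mul_add_rank_mul_le [Fintype m] [Fintype n] [Fintype o] {Z : Matrix l m F}
    {G : Matrix m n F} {W : Matrix n o F} (h : Z * G * W = 0) :
    (Z * G).rank + (G * W).rank ≤ G.rank := by
  set R := LinearMap.range G.mulVecLin
  have hGW : LinearMap.range (G * W).mulVecLin ≤ R := by
    rw [mulVecLin_mul, LinearMap.range_comp]
    exact LinearMap.map_le_range
  have hker : (LinearMap.range (G * W).mulVecLin).comap R.subtype ≤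
      LinearMap.ker (Z.mulVecLin.domRestrict R) := by
    rintro ⟨_, _⟩ ⟨v, rfl⟩
    simp [mulVec_mulVec, ← Matrix.mul_assoc, h]
  have hrange :
      LinearMap.range (Z.mulVecLin.domRestrict R) = LinearMap.range (Z * G).mulVecLin := by
    rw [LinearMap.range_domRestrict, mulVecLin_mul, LinearMap.range_comp]
  have hnullity := (Z.mulVecLin.domRestrict R).finrank_range_add_finrank_ker
  have hle := Submodule.finrank_mono hker
  rw [(Submodule.comapSubtypeEquivOfLe hGW).finrank_eq] at hle
  rw [hrange] at hnullity
  change Module.finrank F (LinearMap.range (Z * G).mulVecLin) +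
    Module.finrank F (LinearMap.range (G * W).mulVecLin) ≤ Module.finrank F R
  omega

lemma eq_zero_or_eq_zero_of_forall_mul_mul_eq_zero [Fintype m] [Fintype n] [DecidableEq m]
    [DecidableEq n] {Y : Matrix l m F} {Z : Matrix n o F}
    (h : ∀ M : Matrix m n F, Y * M * Z = 0) : Y = 0 ∨ Z = 0 := by
  by_contra! hne
  obtain ⟨i, j, hij⟩ : ∃ i j, Y i j ≠ 0 := by simpa [← Matrix.ext_iff] using hne.1
  obtain ⟨k, k', hkk'⟩ : ∃ k k', Z k k' ≠ 0 := by simpa [← Matrix.ext_iff] using hne.2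
  have := congr_fun₂ (h (single j k 1)) i k'
  simp only [mul_apply, single_apply, ite_and, mul_ite, ite_mul, mul_one, mul_zero, zero_mul,
    Finset.sum_ite_eq, Finset.mem_univ, if_true, zero_apply] at this
  exact mul_ne_zero hij hkk' this

lemma subalgebra_bot_ne_top [Fintype m] [DecidableEq m] [Nontrivial m] :
    (⊥ : Subalgebra F (Matrix m m F)) ≠ ⊤ := by
  rw [Ne, Subalgebra.bot_eq_top_iff_finrank_eq_one, Module.finrank_matrix, Module.finrank_self,
    mul_one]
  have := Fintype.one_lt_card (α := m)
  nlinarith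

end Matrix

namespace Algebra

variable {R A : Type*} [CommSemiring R] [Semiring A] [Algebra R A] {S : Set A}

lemma exists_mem_notMem_bot_of_adjoin_eq_top (hS : adjoin R S = ⊤)
    (hbot : (⊥ : Subalgebra R A) ≠ ⊤) : ∃ x ∈ S, x ∉ (⊥ : Subalgebra R A) := by
  by_contra! h
  exact hbot (top_le_iff.1 (hS ▸ adjoin_le h))

lemma mul_mul_eq_zero_of_adjoin_eq_top (hS : adjoin R S = ⊤) {y z u w : A} (hyz : y * z = 0)
    (hone : z * u + w * y = 1) (hySz : ∀ s ∈ S, y * s * z = 0) (a : A) : y * a * z = 0 := by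
  have ha : a ∈ adjoin R S := hS ▸ mem_top
  induction ha using adjoin_induction with
  | mem s hs => exact hySz s hs
  | algebraMap r => rw [← commutes, mul_assoc, hyz, mul_zero]
  | add a b _ _ ha hb => rw [mul_add, add_mul, ha, hb, add_zero]
  | mul a b _ _ ha hb =>
    calc y * (a * b) * z = y * a * (z * u + w * y) * b * z := by rw [hone, mul_one, ← mul_assoc]
      _ = (y * a * z) * (u * b * z) + (y * a * w) * (y * b * z) := by
        simp only [mul_add, add_mul, mul_assoc]
      _ = 0 := by rw [ha, hb, zero_mul, mul_zero, add_zero]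

end Algebra

lemma Matrix.exists_mem_mul_mul_ne_zero_of_adjoin_eq_top {F : Type*} [Field F] {m : Type*}
    [Fintype m] [DecidableEq m] {S : Set (Matrix m m F)} (hS : Algebra.adjoin F S = ⊤)
    {Y Z U W : Matrix m m F} (hYZ : Y * Z = 0) (hone : Z * U + W * Y = 1) (hY : Y ≠ 0)
    (hZ : Z ≠ 0) : ∃ B ∈ S, Y * B * Z ≠ 0 := by
  by_contra! h
  exact (eq_zero_or_eq_zero_of_forall_mul_mul_eq_zero
    (Algebra.mul_mul_eq_zero_of_adjoin_eq_top hS hYZ hone h)).elim hY hZ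

lemma minpoly.aeval_divByMonic_X_sub_C_ne_zero {K B : Type*} [Field K] [Ring B] [Algebra K B]
    {x : B} (hx : IsIntegral K x) {b : K} (hb : (minpoly K x).IsRoot b) :
    Polynomial.aeval x (minpoly K x /ₘ (X - C b)) ≠ 0 := by
  have hfac : (X - C b) * (minpoly K x /ₘ (X - C b)) = minpoly K x :=
    mul_divByMonic_eq_iff_isRoot.2 hb
  refine aeval_ne_zero_of_dvdNotUnit_minpoly hx
    ((monic_X_sub_C b).of_mul_monic_left (by rw [hfac]; exact monic hx))
    ⟨?_, X - C b, not_isUnit_X_sub_C b, ?_⟩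
  · rintro h
    rw [h, mul_zero] at hfac
    exact ne_zero hx hfac.symm
  · rw [mul_comm, hfac]

lemma aeval_divByMonic_X_sub_C_mul_self_eq_zero {R B : Type*} [CommRing R] [Ring B] [Algebra R B]
    {x : B} {p : R[X]} (hp : aeval x p = 0) {b : R} (hpb : p.IsRoot b)
    (hqb : (p /ₘ (X - C b)).IsRoot b) :
    aeval x (p /ₘ (X - C b)) * aeval x (p /ₘ (X - C b)) = 0 := by
  set q := p /ₘ (X - C b)
  obtain ⟨u, hu⟩ := dvd_iff_isRoot.2 hqb
  have hqq : q * q = p * u := by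
    rw [← mul_divByMonic_eq_iff_isRoot.2 hpb]
    nth_rw 2 [hu]
    ring
  rw [← map_mul, hqq, map_mul, hp, zero_mul]

section Cofactors

variable {F : Type*} [Field F] {m : Type*} [Fintype m] [DecidableEq m]

lemma sum_rank_aeval_divByMonic_add_rank_le (A : Matrix m m F) {p : F[X]} (hp : aeval A p = 0)
    {R : Multiset F} (hR : R ≤ p.roots) :
    (R.map fun b => (aeval A (p /ₘ (X - C b))).rank).sum
      + (aeval A (R.map fun b => X - C b).prod).rank ≤ Fintype.card m := by
  induction R using Multiset.induction_on with
  | empty => simp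
  | cons b s ih =>
    have hfac : (X - C b) * (p /ₘ (X - C b)) = p := mul_divByMonic_eq_iff_isRoot.2
      (isRoot_of_mem_roots (Multiset.mem_of_le hR (s.mem_cons_self b)))
    obtain ⟨w, hw⟩ : (s.map fun c => X - C c).prod ∣ p /ₘ (X - C b) := by
      rw [← mul_dvd_mul_iff_left (X_sub_C_ne_zero b), hfac]
      simpa using (Multiset.prod_dvd_prod_of_le (Multiset.map_le_map hR)).trans
        (prod_multiset_X_sub_C_dvd p)
    have hstep := rank_mul_add_rank_mul_le (Z := aeval A (X - C b))
      (G := aeval A (s.map fun c => X - C c).prod) (W := aeval A w)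
      (by rw [← map_mul, ← map_mul, mul_assoc, ← hw, hfac, hp])
    rw [← map_mul, ← map_mul, ← hw] at hstep
    have := ih ((s.le_cons_self b).trans hR)
    simp only [Multiset.map_cons, Multiset.sum_cons, Multiset.prod_cons]
    omega

lemma exists_mem_roots_card_mul_rank_le (A : Matrix m m F) {p : F[X]} (hp : aeval A p = 0)
    (hroots : p.roots ≠ 0) :
    ∃ b ∈ p.roots, p.roots.card * (aeval A (p /ₘ (X - C b))).rank ≤ Fintype.card m := by
  classical
  obtain ⟨b, hb, hmin⟩ := p.roots.toFinset.exists_min_image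
    (fun b => (aeval A (p /ₘ (X - C b))).rank) (Multiset.toFinset_nonempty.2 hroots)
  refine ⟨b, Multiset.mem_toFinset.1 hb, le_trans ?_
    (le_self_add.trans (sum_rank_aeval_divByMonic_add_rank_le A hp le_rfl))⟩
  simpa using Multiset.card_nsmul_le_sum
    (s := p.roots.map fun b => (aeval A (p /ₘ (X - C b))).rank)
    (Multiset.forall_mem_map_iff.2 fun c hc => hmin c (Multiset.mem_toFinset.2 hc))

lemma exists_squareZero_of_not_isRoot_divByMonic {S : Set (Matrix m m F)}
    (hS : Algebra.adjoin F S = ⊤) {A : Matrix m m F} (hAS : A ∈ S)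
    (hA : A ∉ (⊥ : Subalgebra F (Matrix m m F))) {p : F[X]} (hp : aeval A p = 0) {b : F}
    (hpb : p.IsRoot b) (hqb : ¬(p /ₘ (X - C b)).IsRoot b) (hY : aeval A (p /ₘ (X - C b)) ≠ 0)
    {d : ℕ} (hYd : aeval A (p /ₘ (X - C b)) ∈ Submodule.span F (wordsLe S d)) :
    ∃ H ∈ Submodule.span F (wordsLe S (d + 2)), H ≠ 0 ∧ H * H = 0 ∧
      H.rank ≤ (aeval A (p /ₘ (X - C b))).rank := by
  set q := p /ₘ (X - C b)
  have hfac : (X - C b) * q = p := mul_divByMonic_eq_iff_isRoot.2 hpb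
  have hZY : aeval A (X - C b) * aeval A q = 0 := by rw [← map_mul, hfac, hp]
  have hZ : aeval A (X - C b) ≠ 0 := by
    rw [map_sub, aeval_X, aeval_C, sub_ne_zero]
    exact fun h => hA (h ▸ Subalgebra.algebraMap_mem _ b)
  obtain ⟨u, w, huw⟩ : IsCoprime (X - C b) q :=
    (irreducible_X_sub_C b).coprime_iff_not_dvd.2 (mt dvd_iff_isRoot.1 hqb)
  obtain ⟨B, hBS, hH⟩ := Matrix.exists_mem_mul_mul_ne_zero_of_adjoin_eq_top hS
    (by rw [← map_mul, mul_comm, hfac, hp]) (U := aeval A u) (W := aeval A w)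
    (by rw [← map_mul, ← map_mul, ← map_add, mul_comm, huw, map_one]) hY hZ
  have hZ1 : aeval A (X - C b) ∈ Submodule.span F (wordsLe S 1) :=
    aeval_mem_span_wordsLe hAS (natDegree_X_sub_C b).le
  have hB1 : B ∈ Submodule.span F (wordsLe S 1) := Submodule.subset_span (mem_wordsLe_one hBS)
  have hmem := mul_mem_span_wordsLe (mul_mem_span_wordsLe hYd hB1) hZ1
  refine ⟨aeval A q * B * aeval A (X - C b), hmem, hH, ?_, ?_⟩
  · calc _ = aeval A q * B * (aeval A (X - C b) * aeval A q) * B * aeval A (X - C b) := by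
          simp only [mul_assoc]
      _ = 0 := by rw [hZY, mul_zero, zero_mul, zero_mul]
  · rw [mul_assoc]
    exact rank_mul_le_left _ _

end Cofactors

theorem stmt_3 {F : Type*} [Field F] [IsAlgClosed F] {n : ℕ} (hn : 2 ≤ n)
    (S : Set (Matrix (Fin n) (Fin n) F))
    (hirr : Algebra.adjoin F S = (⊤ : Subalgebra F (Matrix (Fin n) (Fin n) F))) :
    ∃ lam rho : ℕ, 0 < lam ∧ 0 < rho ∧ lam * rho ≤ 2 * n ∧
      ∃ H ∈ Submodule.span F (wordsLe S lam),
        H ≠ 0 ∧ H * H = 0 ∧ H.rank = rho := by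
  have : Nontrivial (Fin n) := Fin.nontrivial_iff_two_le.2 hn
  obtain ⟨A, hAS, hA⟩ :=
    Algebra.exists_mem_notMem_bot_of_adjoin_eq_top hirr Matrix.subalgebra_bot_ne_top
  have hint : IsIntegral F A := .of_finite F A
  have hD : 2 ≤ (minpoly F A).natDegree :=
    (minpoly.two_le_natDegree_iff hint).2 fun h => hA (Algebra.mem_bot.2 h)
  obtain ⟨b, hb, hrank⟩ := exists_mem_roots_card_mul_rank_le A (minpoly.aeval F A)
    (by rw [← Multiset.card_pos, IsAlgClosed.card_roots_eq_natDegree]; omega)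
  rw [IsAlgClosed.card_roots_eq_natDegree, Fintype.card_fin] at hrank
  have hpb : (minpoly F A).IsRoot b := isRoot_of_mem_roots hb
  set D := (minpoly F A).natDegree
  set Y := aeval A (minpoly F A /ₘ (X - C b))
  have hY : Y ≠ 0 := minpoly.aeval_divByMonic_X_sub_C_ne_zero hint hpb
  have hYmem : Y ∈ Submodule.span F (wordsLe S (D - 1)) := aeval_mem_span_wordsLe hAS
    (by rw [natDegree_divByMonic _ (monic_X_sub_C b), natDegree_X_sub_C])
  by_cases hqb : (minpoly F A /ₘ (X - C b)).IsRoot b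
  · refine ⟨D - 1, Y.rank, by omega, rank_pos_of_ne_zero hY, ?_, Y, hYmem, hY,
      aeval_divByMonic_X_sub_C_mul_self_eq_zero (minpoly.aeval F A) hpb hqb, rfl⟩
    calc (D - 1) * Y.rank ≤ D * Y.rank := Nat.mul_le_mul_right _ (Nat.sub_le D 1)
      _ ≤ 2 * n := by omega
  · obtain ⟨H, hH, hH0, hHH, hHrank⟩ := exists_squareZero_of_not_isRoot_divByMonic hirr hAS hA
      (minpoly.aeval F A) hpb hqb hY hYmem
    refine ⟨D - 1 + 2, H.rank, by omega, rank_pos_of_ne_zero hH0, ?_, H, hH, hH0, hHH, rfl⟩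
    calc (D - 1 + 2) * H.rank ≤ D * Y.rank + Y.rank := by
          rw [show D - 1 + 2 = D + 1 by omega, add_mul, one_mul]
          exact add_le_add (Nat.mul_le_mul_left D hHrank) hHrank
      _ ≤ 2 * n := by nlinarith
end

section
/- Let A be an n×n matrix over an algebraically closed field F and r a natural number. Assume that rank(P·A·Q) ≤ r for all matrices P ∈ F^{p×n} and Q ∈ F^{n×q} (for all p, q) satisfying P·Q = 0. Then there exists μ ∈ F such that rank(A − μ·I) ≤ 2r. -/
/-!
Say that `f : End M` enlarges subspaces by at most `r` if `dim (V + f V) ≤ dim V + r` for every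
subspace `V`. The matrix hypothesis gives this for `f = A`: for `P` with kernel `V` and `Q`
with image `V` one has `P * Q = 0` and `rank (P A Q) = dim ((V + A V) / V)`.

If `f` is not a scalar, an eigenspace `E` of `f` and an eigenvector of the map induced on `M / E`
produce a vector `x` that is not an eigenvector while `W = span {x, f x}` is `f`-invariant. A
subspace of `M / W` lifts to a subspace `V ∋ x` of at most one dimension more, and `V + f V ⊇ W`,
so the map induced on `M / W` enlarges subspaces by at most `r - 1`. By induction on the dimension
it is within rank `2 (r - 1)` of a scalar `μ`, and lifting back through the plane `W` costs at
most `2`.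
-/

open Module Submodule
open LinearMap (range)

theorem LinearMap.finrank_map_add_finrank_inf_ker {K M M₂ : Type*} [DivisionRing K]
    [AddCommGroup M] [Module K M] [AddCommGroup M₂] [Module K M₂] [FiniteDimensional K M]
    (π : M →ₗ[K] M₂) (S : Submodule K M) :
    finrank K (S.map π) + finrank K ↥(S ⊓ ker π) = finrank K S := by
  have h := (π ∘ₗ S.subtype).finrank_range_add_finrank_ker
  rwa [range_comp, range_subtype, ker_comp, (equivMapOfInjective _ S.injective_subtype
    _).finrank_eq, map_comap_subtype] at h

namespace Module.End

section Field

variable {F M : Type*} [Field F] [AddCommGroup M] [Module F M]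

theorem apply_apply_mem_span_pair {f : End F M} {α β : F} {x : M}
    (hx : f x - β • x ∈ f.eigenspace α) : f (f x) ∈ span F {x, f x} := by
  rw [mem_eigenspace_iff, map_sub, map_smul] at hx
  exact mem_span_pair.mpr ⟨-(α * β), α + β, by linear_combination (norm := module) -hx⟩

theorem apply_notMem_span_singleton {f : End F M} {p : Submodule F M} {β : F} {x : M}
    (hxp : x ∉ p) (hp : f x - β • x ∈ p) (hne : f x - β • x ≠ 0) : f x ∉ span F {x} := by
  intro hfx
  obtain ⟨c, hc⟩ := mem_span_singleton.mp hfx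
  rw [← hc, ← sub_smul] at hp hne
  exact hxp ((p.smul_mem_iff (left_ne_zero_of_smul hne)).mp hp)

theorem exists_sub_smul_mem_of_ne_top [IsAlgClosed F] [FiniteDimensional F M] (f : End F M)
    {p : Submodule F M} (hp : p ≤ p.comap f) (hne : p ≠ ⊤) :
    ∃ (β : F) (u : M), u ∉ p ∧ f u - β • u ∈ p := by
  have : Nontrivial (M ⧸ p) := Quotient.nontrivial_iff.mpr hne
  obtain ⟨β, hβ⟩ := exists_eigenvalue (p.mapQ p f hp)
  obtain ⟨ū, hū⟩ := hβ.exists_hasEigenvector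
  obtain ⟨u, rfl⟩ := p.mkQ_surjective ū
  refine ⟨β, u, fun hu => hū.2 ((Quotient.mk_eq_zero p).mpr hu), ?_⟩
  rw [← Quotient.mk_eq_zero p, Quotient.mk_sub, Quotient.mk_smul, sub_eq_zero]
  exact hū.apply_eq_smul

theorem exists_apply_notMem_span_singleton_apply_apply_mem_span_pair [IsAlgClosed F]
    [FiniteDimensional F M] (f : End F M) (hf : ∀ c : F, f ≠ c • 1) :
    ∃ x : M, f x ∉ span F {x} ∧ f (f x) ∈ span F {x, f x} := by
  have : Nontrivial M := by
    by_contra h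
    rw [not_nontrivial_iff_subsingleton] at h
    exact hf 0 (Subsingleton.elim _ _)
  obtain ⟨α, hα⟩ := f.exists_eigenvalue
  have hK : f.eigenspace α ≠ ⊤ := fun h =>
    hf α (LinearMap.ext fun x => mem_eigenspace_iff.mp (h ▸ mem_top))
  obtain ⟨β, u, hu, huβ⟩ := f.exists_sub_smul_mem_of_ne_top
    ((mem_invtSubmodule f).mp (f.eigenspace_mem_invtSubmodule α)) hK
  obtain ⟨x, hxK, hxβ, hx0⟩ : ∃ x, x ∉ f.eigenspace α ∧ f x - β • x ∈ f.eigenspace α ∧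
      f x - β • x ≠ 0 := by
    by_cases h0 : f u - β • u = 0
    · -- `u` is a `β`-eigenvector with `β ≠ α`, so adding an `α`-eigenvector spoils this
      obtain ⟨w, hw, hw0⟩ := exists_mem_ne_zero_of_ne_bot hα
      have hαβ : α ≠ β := by
        rintro rfl
        exact hu (mem_eigenspace_iff.mpr (sub_eq_zero.mp h0))
      have hshift : f (u + w) - β • (u + w) = (α - β) • w := by
        rw [map_add, mem_eigenspace_iff.mp hw]
        linear_combination (norm := module) h0
      refine ⟨u + w, fun h => hu (by simpa using sub_mem h hw), ?_, ?_⟩ <;> rw [hshift]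
      · exact smul_mem _ _ hw
      · exact smul_ne_zero (sub_ne_zero.mpr hαβ) hw0
    · exact ⟨u, hu, huβ, h0⟩
  exact ⟨x, apply_notMem_span_singleton hxK hxβ hx0, apply_apply_mem_span_pair hxβ⟩

end Field

section DivisionRing

variable {K M : Type*} [DivisionRing K] [AddCommGroup M] [Module K M]

def EnlargesAtMost (f : End K M) (r : ℕ) : Prop :=
  ∀ V : Submodule K M, finrank K ↥(V ⊔ V.map f) ≤ finrank K V + r

variable {f : End K M} {r : ℕ}

theorem EnlargesAtMost.one_le (hf : f.EnlargesAtMost r) {x : M} (hx : f x ∉ span K {x}) :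
    1 ≤ r := by
  have hlt : span K {x} < span K {x} ⊔ (span K {x}).map f :=
    left_lt_sup.mpr fun h => hx (h (mem_map_of_mem (mem_span_singleton_self x)))
  have := finrank_lt_finrank_of_lt hlt
  have := hf (span K {x})
  omega

theorem EnlargesAtMost.mapQ_span_pair [FiniteDimensional K M] (hf : f.EnlargesAtMost (r + 1))
    {x : M} (hW2 : finrank K (span K {x, f x}) = 2)
    (hW : span K {x, f x} ≤ (span K {x, f x}).comap f) :
    EnlargesAtMost ((span K {x, f x}).mapQ _ f hW) r := by
  generalize hWdef : span K {x, f x} = W at hW hW2 ⊢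
  intro Vb
  obtain ⟨s, hs⟩ := W.mkQ.exists_rightInverse_of_surjective W.range_mkQ
  set V := span K {x} ⊔ Vb.map s
  have hVb : (Vb.map s).map W.mkQ = Vb := by rw [← map_comp, hs, map_id]
  have hWV : W ≤ V ⊔ V.map f := by
    rw [← hWdef, span_le]
    rintro y (rfl | rfl)
    · exact mem_sup_left (mem_sup_left (mem_span_singleton_self y))
    · exact mem_sup_right (mem_map_of_mem (mem_sup_left (mem_span_singleton_self x)))
  have hfb : Vb.map (W.mapQ W f hW) = ((Vb.map s).map f).map W.mkQ := by
    rw [← map_comp, ← mapQ_mkQ W W f (h := hW), map_comp, hVb]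
  have hle : Vb ⊔ Vb.map (W.mapQ W f hW) ≤ (V ⊔ V.map f).map W.mkQ :=
    calc Vb ⊔ Vb.map (W.mapQ W f hW) = (Vb.map s ⊔ (Vb.map s).map f).map W.mkQ := by
          rw [Submodule.map_sup, hVb, hfb]
      _ ≤ (V ⊔ V.map f).map W.mkQ := map_mono (sup_le_sup le_sup_right (map_mono le_sup_right))
  have hker := W.mkQ.finrank_map_add_finrank_inf_ker (V ⊔ V.map f)
  rw [ker_mkQ, inf_eq_right.mpr hWV, hW2] at hker
  have hV : finrank K V ≤ 1 + finrank K Vb :=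
    (finrank_add_le_finrank_add_finrank _ _).trans
      (add_le_add ((finrank_span_le_card _).trans (by simp)) (finrank_map_le s Vb))
  have := finrank_mono hle
  have := hf V
  omega

theorem finrank_range_le_finrank_range_mapQ_add [FiniteDimensional K M] (g : End K M)
    {p : Submodule K M} (hp : p ≤ p.comap g) :
    finrank K (range g) ≤ finrank K (range (p.mapQ p g hp)) + finrank K p := by
  have hker := p.mkQ.finrank_map_add_finrank_inf_ker (range g)
  rw [ker_mkQ] at hker
  have hmap : (range g).map p.mkQ ≤ range (p.mapQ p g hp) := by
    rw [← LinearMap.range_comp, ← mapQ_mkQ]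
    exact LinearMap.range_comp_le_range _ _
  have := finrank_mono hmap
  have := finrank_mono (inf_le_right : range g ⊓ p ≤ p)
  omega

end DivisionRing

theorem EnlargesAtMost.exists_finrank_range_sub_smul_le {F M : Type*} [Field F] [IsAlgClosed F]
    [AddCommGroup M] [Module F M] [FiniteDimensional F M] {f : End F M} {r : ℕ}
    (hf : f.EnlargesAtMost r) : ∃ μ : F, finrank F (range (f - μ • 1)) ≤ 2 * r := by
  induction hd : finrank F M using Nat.strong_induction_on generalizing M r with
  | _ d ih =>
  by_cases hsc : ∃ c : F, f = c • 1
  · obtain ⟨c, rfl⟩ := hsc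
    exact ⟨c, by rw [sub_self, LinearMap.range_zero, finrank_bot]; omega⟩
  push Not at hsc
  obtain ⟨x, hx, hfx⟩ := f.exists_apply_notMem_span_singleton_apply_apply_mem_span_pair hsc
  obtain ⟨r, rfl⟩ := Nat.exists_eq_add_of_le' (hf.one_le hx)
  have hx0 : x ≠ 0 := by
    rintro rfl
    simp at hx
  have hW2 : finrank F (span F {x, f x}) = 2 := by
    rw [span_insert, finrank_sup_span_singleton hx, finrank_span_singleton hx0]
  have hW : span F {x, f x} ≤ (span F {x, f x}).comap f := by
    rw [span_le]
    rintro y (rfl | rfl)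
    · exact subset_span (by simp)
    · exact hfx
  obtain ⟨μ, hμ⟩ := ih _ (by have := (span F {x, f x}).finrank_quotient_add_finrank; omega)
    (hf.mapQ_span_pair hW2 hW) rfl
  refine ⟨μ, ?_⟩
  have hWμ : span F {x, f x} ≤ (span F {x, f x}).comap (f - μ • 1) := fun v hv =>
    show f v - μ • v ∈ span F {x, f x} from sub_mem (hW hv) (smul_mem _ μ hv)
  have hmapQ :
      (span F {x, f x}).mapQ _ (f - μ • 1) hWμ = (span F {x, f x}).mapQ _ f hW - μ • 1 := by
    ext v
    simp
  have := finrank_range_le_finrank_range_mapQ_add (f - μ • 1) hWμ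
  rw [hmapQ, hW2] at this
  omega

end Module.End

theorem Matrix.enlargesAtMost_mulVecLin {F n : Type*} [Field F] [Fintype n] [DecidableEq n]
    {A : Matrix n n F} {r : ℕ} (h : ∀ P Q : Matrix n n F, P * Q = 0 → (P * A * Q).rank ≤ r) :
    End.EnlargesAtMost A.mulVecLin r := by
  intro V
  obtain ⟨W, hVW⟩ := V.exists_isCompl
  set πW := W.projection V hVW.symm
  set πV := V.projection W hVW
  have hPQ : πW.toMatrix' * πV.toMatrix' = 0 := by
    rw [← LinearMap.toMatrix'_comp, LinearMap.range_le_ker_iff.mp (by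
      rw [range_projection, ker_projection]), map_zero]
  have hrank :
      (πW.toMatrix' * A * πV.toMatrix').rank = finrank F ((V.map A.mulVecLin).map πW) := by
    have hmul (g : (n → F) →ₗ[F] n → F) : g.toMatrix'.mulVecLin = g := by
      rw [← Matrix.toLin'_apply', Matrix.toLin'_toMatrix']
    rw [Matrix.rank, Matrix.mulVecLin_mul, Matrix.mulVecLin_mul, hmul, hmul,
      LinearMap.range_comp, range_projection, Submodule.map_comp]
  have hker := πW.finrank_map_add_finrank_inf_ker (V ⊔ V.map A.mulVecLin)
  rw [Submodule.map_sup, LinearMap.le_ker_iff_map.mp (ker_projection hVW.symm).ge, bot_sup_eq,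
    ker_projection, inf_eq_right.mpr le_sup_left] at hker
  have := h _ _ hPQ
  omega

theorem stmt_4 {F : Type*} [Field F] [IsAlgClosed F] {n : ℕ}
    (A : Matrix (Fin n) (Fin n) F) (r : ℕ)
    (h : ∀ (p q : ℕ) (P : Matrix (Fin p) (Fin n) F) (Q : Matrix (Fin n) (Fin q) F),
      P * Q = 0 → (P * A * Q).rank ≤ r) :
    ∃ μ : F, (A - μ • (1 : Matrix (Fin n) (Fin n) F)).rank ≤ 2 * r := by
  obtain ⟨μ, hμ⟩ := End.EnlargesAtMost.exists_finrank_range_sub_smul_le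
    (Matrix.enlargesAtMost_mulVecLin (h n n))
  refine ⟨μ, ?_⟩
  rwa [Matrix.rank, ← Matrix.toLin'_apply', map_sub, map_smul, Matrix.toLin'_one,
    Matrix.toLin'_apply', ← Module.End.one_eq_id]
end

section
/- Let A be an n×n matrix in rational normal form with k companion-matrix diagonal blocks. Then A has a square submatrix A[I|J] with row index set I and column index set J disjoint (I ∩ J = ∅), |I| = |J| ≥ (n − k)/2, such that A[I|J] is a lower-triangular matrix with all diagonal entries equal to 1; in particular rank of the submatrix is at least (n−k)/2. -/
/-!
In a companion block of size `m`, the entries at (row `2t+1`, column `2s`) with `t, s < ⌊m/2⌋`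
form an identity matrix: none of these columns is the last one, and the subdiagonal ones sit
exactly at `t = s`. Taking these rows and columns in every block gives, by block-diagonality,
an identity submatrix of size `∑ ⌊mᵢ/2⌋ ≥ (n - k)/2`, whose row and column index sets are
disjoint by parity.
-/

open Matrix

namespace Fin

def oddIndex (m : ℕ) (t : Fin (m / 2)) : Fin m := ⟨2 * t + 1, by omega⟩

def evenIndex (m : ℕ) (t : Fin (m / 2)) : Fin m := ⟨2 * t, by omega⟩

theorem oddIndex_injective (m : ℕ) : Function.Injective (oddIndex m) :=
  fun s t h => Fin.ext (by simpa [oddIndex] using h)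

theorem evenIndex_injective (m : ℕ) : Function.Injective (evenIndex m) :=
  fun s t h => Fin.ext (by simpa [evenIndex] using h)

theorem oddIndex_ne_evenIndex (m : ℕ) (s t : Fin (m / 2)) : oddIndex m s ≠ evenIndex m t := by
  simp only [oddIndex, evenIndex, ne_eq, Fin.mk.injEq]
  omega

end Fin

theorem companionMatrix_submatrix_oddIndex_evenIndex {F : Type*} [Field F] (f : Polynomial F) :
    (companionMatrix f).submatrix (Fin.oddIndex _) (Fin.evenIndex _) = 1 := by
  ext t s
  have hs := s.isLt
  have hnotLast : 2 * (s : ℕ) ≠ f.natDegree - 1 := by omega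
  simp [companionMatrix, Fin.oddIndex, Fin.evenIndex, one_apply, Fin.ext_iff, hnotLast]

theorem Matrix.blockDiagonal'_submatrix_sigma_map {o α : Type*} {m n m' n' : o → Type*}
    [DecidableEq o] [Zero α] (M : ∀ i, Matrix (m i) (n i) α)
    (r : ∀ i, m' i → m i) (c : ∀ i, n' i → n i) :
    (blockDiagonal' M).submatrix (Sigma.map id r) (Sigma.map id c) =
      blockDiagonal' fun i => (M i).submatrix (r i) (c i) := by
  ext ⟨i, a⟩ ⟨j, b⟩
  by_cases hij : i = j
  · subst hij
    exact (blockDiagonal'_apply_eq M i (r i a) (c i b)).trans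
      (blockDiagonal'_apply_eq (fun i => (M i).submatrix (r i) (c i)) i a b).symm
  · exact (blockDiagonal'_apply_ne M (r i a) (c j b) hij).trans
      (blockDiagonal'_apply_ne _ a b hij).symm

theorem Sigma.map_id_ne_map_id {α : Type*} {β γ : α → Type*} {g₁ g₂ : ∀ i, β i → γ i}
    (h : ∀ i s t, g₁ i s ≠ g₂ i t) (x y : Σ i, β i) : Sigma.map id g₁ x ≠ Sigma.map id g₂ y := by
  obtain ⟨i, s⟩ := x
  obtain ⟨j, t⟩ := y
  intro hst
  obtain ⟨rfl, hst⟩ := Sigma.mk.inj_iff.mp hst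
  exact h i s t (eq_of_heq hst)

theorem Finset.sum_le_two_mul_sum_div_two_add_card {ι : Type*} (s : Finset ι) (g : ι → ℕ) :
    ∑ i ∈ s, g i ≤ 2 * ∑ i ∈ s, g i / 2 + s.card := by
  calc ∑ i ∈ s, g i ≤ ∑ i ∈ s, (2 * (g i / 2) + 1) := Finset.sum_le_sum fun i _ => by omega
    _ = 2 * ∑ i ∈ s, g i / 2 + s.card := by
      rw [Finset.sum_add_distrib, Finset.mul_sum, Finset.sum_const, smul_eq_mul, mul_one]

theorem stmt_5_general {F : Type*} [Field F] {k : ℕ}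
    (f : Fin k → Polynomial F)
    (A : Matrix (Σ i : Fin k, Fin (f i).natDegree) (Σ i : Fin k, Fin (f i).natDegree) F)
    (hA : A = Matrix.blockDiagonal' fun i => companionMatrix (f i))
    (n : ℕ) (hn : n = ∑ i : Fin k, (f i).natDegree) :
    ∃ (r : ℕ) (ι κ : Fin r → (Σ i : Fin k, Fin (f i).natDegree)),
      Function.Injective ι ∧ Function.Injective κ ∧
      (Set.range ι ∩ Set.range κ = ∅) ∧
      n - k ≤ 2 * r ∧
      (∀ a : Fin r, A.submatrix ι κ a a = 1) ∧
      (∀ a b : Fin r, a < b → A.submatrix ι κ a b = 0) ∧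
      n - k ≤ 2 * (A.submatrix ι κ).rank := by
  classical
  let e := (Fintype.equivFin (Σ i : Fin k, Fin ((f i).natDegree / 2))).symm
  let ι := Sigma.map (β₂ := fun i => Fin (f i).natDegree) id (fun i => Fin.oddIndex _) ∘ e
  let κ := Sigma.map (β₂ := fun i => Fin (f i).natDegree) id (fun i => Fin.evenIndex _) ∘ e
  have hsub : A.submatrix ι κ = 1 := by
    rw [hA, ← submatrix_submatrix, blockDiagonal'_submatrix_sigma_map]
    simp only [id_eq, companionMatrix_submatrix_oddIndex_evenIndex]
    rw [← Pi.one_def, blockDiagonal'_one, submatrix_one_equiv]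
  have hbound : n - k ≤ 2 * Fintype.card (Σ i : Fin k, Fin ((f i).natDegree / 2)) := by
    have := Finset.univ.sum_le_two_mul_sum_div_two_add_card fun i => (f i).natDegree
    simp only [Fintype.card_sigma, Fintype.card_fin, Finset.card_univ] at this ⊢
    omega
  refine ⟨_, ι, κ, ?_, ?_, ?_, hbound, fun a => by rw [hsub, one_apply_eq],
    fun a b hab => by rw [hsub, one_apply_ne hab.ne], by simpa [hsub] using hbound⟩
  · refine Function.Injective.comp ?_ e.injective
    exact Function.injective_id.sigma_map fun i => Fin.oddIndex_injective _
  · refine Function.Injective.comp ?_ e.injective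
    exact Function.injective_id.sigma_map fun i => Fin.evenIndex_injective _
  · refine Set.eq_empty_of_forall_notMem ?_
    rintro _ ⟨⟨a, rfl⟩, ⟨b, hba⟩⟩
    exact Sigma.map_id_ne_map_id (fun i => Fin.oddIndex_ne_evenIndex _) (e a) (e b) hba.symm

/-- A matrix in rational normal form (block diagonal of `k` companion matrices) has a
unit lower-triangular square submatrix `A[I|J]` with `I ∩ J = ∅` and
`|I| = |J| ≥ (n-k)/2`; in particular its rank is at least `(n-k)/2`. -/
theorem stmt_5 {F : Type*} [Field F] {k : ℕ}
    (f : Fin k → Polynomial F)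
    (hmonic : ∀ i, (f i).Monic)
    (hdeg : ∀ i, 0 < (f i).natDegree)
    (A : Matrix (Σ i : Fin k, Fin (f i).natDegree) (Σ i : Fin k, Fin (f i).natDegree) F)
    (hA : A = Matrix.blockDiagonal' fun i => companionMatrix (f i))
    (n : ℕ) (hn : n = ∑ i : Fin k, (f i).natDegree) :
    ∃ (r : ℕ) (ι κ : Fin r → (Σ i : Fin k, Fin (f i).natDegree)),
      Function.Injective ι ∧ Function.Injective κ ∧
      (Set.range ι ∩ Set.range κ = ∅) ∧
      n - k ≤ 2 * r ∧
      (∀ a : Fin r, A.submatrix ι κ a a = 1) ∧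
      (∀ a b : Fin r, a < b → A.submatrix ι κ a b = 0) ∧
      n - k ≤ 2 * (A.submatrix ι κ).rank :=
  stmt_5_general f A hA n hn
end

section
/- Let S ⊆ Mat_n(F), P ∈ F^{p×n}, Q ∈ F^{n×q}, and let k be the smallest positive integer such that P·M·Q ≠ 0 for some word M of length k in S (assume such k exists). Then for any A₁, …, A_k ∈ S, rank(P·A₁⋯A_k·Q) ≤ n/k. -/
/-!
Write `w = A₁ ⋯ A_k` and let `Xⱼ` be the column space of `A_{j+1} ⋯ A_k Q`. Minimality of `k`
says that `P A₁ ⋯ Aᵢ` kills `Xⱼ` whenever `i < j` (the word `A₁ ⋯ Aᵢ A_{j+1} ⋯ A_k` is shorter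
than `k` and nonempty), while it maps `Xᵢ` onto the column space of `P w Q`, of dimension
`r = rank (P w Q)`. Adding the `Xᵢ` one at a time from `i = k - 1` down to `0`, each step
therefore raises the dimension of the span by at least `r`, so `r k ≤ dim (X₀ + ⋯ + X_{k-1}) ≤ n`.
-/

open Module

theorem Submodule.finrank_add_finrank_map_le_finrank_sup {K V W : Type*} [DivisionRing K]
    [AddCommGroup V] [Module K V] [FiniteDimensional K V] [AddCommGroup W] [Module K W]
    {Z : Submodule K V} (X : Submodule K V) {f : V →ₗ[K] W} (hZ : Z ≤ LinearMap.ker f) :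
    finrank K Z + finrank K (X.map f) ≤ finrank K ↥(Z ⊔ X) := by
  set g := f.domRestrict (Z ⊔ X)
  have hker : finrank K Z ≤ finrank K (LinearMap.ker g) := by
    rw [LinearMap.ker_domRestrict,
      ← (Submodule.comapSubtypeEquivOfLe (le_sup_left : Z ≤ Z ⊔ X)).finrank_eq]
    exact Submodule.finrank_mono (Submodule.comap_mono hZ)
  have hrange : finrank K (X.map f) ≤ finrank K (LinearMap.range g) := by
    rw [LinearMap.range_domRestrict]
    exact Submodule.finrank_mono (Submodule.map_mono le_sup_right)
  rw [← LinearMap.finrank_range_add_finrank_ker g]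
  omega

theorem Submodule.sum_finrank_map_le_finrank_iSup {K V W : Type*} [DivisionRing K]
    [AddCommGroup V] [Module K V] [FiniteDimensional K V] [AddCommGroup W] [Module K W]
    (k : ℕ) (f : ℕ → V →ₗ[K] W) (X : ℕ → Submodule K V)
    (hX : ∀ i j, i < j → j < k → X j ≤ LinearMap.ker (f i)) :
    ∑ i ∈ Finset.range k, finrank K ((X i).map (f i)) ≤ finrank K ↥(⨆ i < k, X i) := by
  induction k generalizing f X with
  | zero => simp
  | succ k ih =>
    have hrest : (⨆ i < k, X (i + 1)) ≤ LinearMap.ker (f 0) :=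
      iSup₂_le fun j hj => hX 0 (j + 1) j.succ_pos (by omega)
    rw [Finset.sum_range_succ', Nat.iSup_lt_succ', sup_comm]
    calc _ ≤ finrank K ↥(⨆ i < k, X (i + 1)) + finrank K ((X 0).map (f 0)) :=
          Nat.add_le_add_right (ih (fun i => f (i + 1)) (fun i => X (i + 1))
            fun i j hij hjk => hX (i + 1) (j + 1) (by omega) (by omega)) _
      _ ≤ _ := finrank_add_finrank_map_le_finrank_sup _ hrest

theorem Matrix.rank_mul_prod_mul_mul_length_le {F : Type*} [Field F] {n p q : ℕ}
    (P : Matrix (Fin p) (Fin n) F) (Q : Matrix (Fin n) (Fin q) F)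
    (w : List (Matrix (Fin n) (Fin n) F))
    (hgap : ∀ i j, i < j → j < w.length → P * (w.take i).prod * (w.drop j).prod * Q = 0) :
    (P * w.prod * Q).rank * w.length ≤ n := by
  have hmap : ∀ i, finrank F ↥((LinearMap.range ((w.drop i).prod * Q).mulVecLin).map
      (P * (w.take i).prod).mulVecLin) = (P * w.prod * Q).rank := by
    intro i
    have hsplit : P * (w.take i).prod * ((w.drop i).prod * Q) = P * w.prod * Q := by
      rw [← w.prod_take_mul_prod_drop i]
      simp only [Matrix.mul_assoc]
    rw [← LinearMap.range_comp, ← Matrix.mulVecLin_mul, hsplit, Matrix.rank]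
  have hsum := Submodule.sum_finrank_map_le_finrank_iSup w.length
    (fun i => (P * (w.take i).prod).mulVecLin)
    (fun j => LinearMap.range ((w.drop j).prod * Q).mulVecLin) fun i j hij hjk => by
      rw [LinearMap.range_le_ker_iff, ← Matrix.mulVecLin_mul, ← Matrix.mul_assoc,
        hgap i j hij hjk, Matrix.mulVecLin_zero]
  simp only [hmap, Finset.sum_const, Finset.card_range, smul_eq_mul] at hsum
  calc _ = w.length * (P * w.prod * Q).rank := mul_comm _ _
    _ ≤ _ := hsum
    _ ≤ finrank F (Fin n → F) := Submodule.finrank_le _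
    _ = n := finrank_fin_fun F

theorem stmt_6_general {F : Type*} [Field F] {n p q : ℕ}
    (S : Set (Matrix (Fin n) (Fin n) F))
    (P : Matrix (Fin p) (Fin n) F) (Q : Matrix (Fin n) (Fin q) F)
    (k : ℕ)
    (hmin : ∀ w : List (Matrix (Fin n) (Fin n) F),
      0 < w.length → w.length < k → (∀ a ∈ w, a ∈ S) → P * w.prod * Q = 0) :
    ∀ w : List (Matrix (Fin n) (Fin n) F), w.length = k → (∀ a ∈ w, a ∈ S) →
      (P * w.prod * Q).rank * k ≤ n := by
  rintro w rfl hS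
  refine Matrix.rank_mul_prod_mul_mul_length_le P Q w fun i j hij hjk => ?_
  have hmem : ∀ a ∈ w.take i ++ w.drop j, a ∈ S := fun a ha =>
    (List.mem_append.mp ha).elim (fun h => hS a (List.mem_of_mem_take h))
      (fun h => hS a (List.mem_of_mem_drop h))
  have hlen : (w.take i ++ w.drop j).length = min i w.length + (w.length - j) := by
    simp only [List.length_append, List.length_take, List.length_drop]
  simpa [Matrix.mul_assoc, List.prod_append] using
    hmin (w.take i ++ w.drop j) (by rw [hlen]; omega) (by rw [hlen]; omega) hmem

theorem stmt_6 {F : Type*} [Field F] {n p q : ℕ}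
    (S : Set (Matrix (Fin n) (Fin n) F))
    (P : Matrix (Fin p) (Fin n) F) (Q : Matrix (Fin n) (Fin q) F)
    (k : ℕ) (hk : 0 < k)
    (hex : ∃ w : List (Matrix (Fin n) (Fin n) F),
      w.length = k ∧ (∀ a ∈ w, a ∈ S) ∧ P * w.prod * Q ≠ 0)
    (hmin : ∀ w : List (Matrix (Fin n) (Fin n) F),
      0 < w.length → w.length < k → (∀ a ∈ w, a ∈ S) → P * w.prod * Q = 0) :
    ∀ w : List (Matrix (Fin n) (Fin n) F), w.length = k → (∀ a ∈ w, a ∈ S) →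
      (P * w.prod * Q).rank * k ≤ n :=
  stmt_6_general S P Q k hmin
end

section
/- For any n×n matrix A over a field F, the minimum over μ ∈ F of rank(A − μ·I) equals n − k, where k is the number of invariant factors (equivalently, the number of companion blocks in the rational canonical form) of A, provided F is algebraically closed. -/
/-!
`A - μ` is similar to the block sum of the matrices `C(fᵢ) - μ`, so its rank is
`∑ rank (C(fᵢ) - μ)`. Deleting the first row and the last column of `C(f) - μ` leaves a
unitriangular matrix, so every block has rank at least `deg fᵢ - 1`, whence
`rank (A - μ) ≥ ∑ (deg fᵢ - 1) = n - k` for all `μ`. If `f(μ) = 0`, the coefficient vector of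
`f / (X - μ)` is a nonzero kernel vector of `C(f) - μ`, so the block has rank exactly
`deg f - 1`. As `f₁` divides every `fᵢ`, a root of `f₁` (which exists since `F` is
algebraically closed) is a common root, and there the bound `n - k` is attained.
-/

open Polynomial Matrix Module

theorem LinearMap.finrank_range_piMap {K ι : Type*} [Field K] [Fintype ι] {M N : ι → Type*}
    [∀ i, AddCommGroup (M i)] [∀ i, Module K (M i)] [∀ i, FiniteDimensional K (M i)]
    [∀ i, AddCommGroup (N i)] [∀ i, Module K (N i)] (f : ∀ i, M i →ₗ[K] N i) :
    finrank K (range (piMap f)) = ∑ i, finrank K (range (f i)) := by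
  have hker : ker (piMap f) = ker (piMap fun i => (f i).rangeRestrict) := by
    ext x
    simp [funext_iff, Subtype.ext_iff]
  have hsurj : range (piMap fun i => (f i).rangeRestrict) = ⊤ :=
    range_eq_top.mpr (Function.Surjective.piMap fun i => (f i).surjective_rangeRestrict)
  have h₁ := (piMap f).finrank_range_add_finrank_ker
  have h₂ := (piMap fun i => (f i).rangeRestrict).finrank_range_add_finrank_ker
  rw [hsurj, finrank_top, finrank_pi_fintype, ← hker] at h₂
  omega

theorem Matrix.rank_blockDiagonal' {K o : Type*} [Field K] [Fintype o] [DecidableEq o]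
    {m n : o → Type*} [∀ i, Fintype (n i)] (M : ∀ i, Matrix (m i) (n i) K) :
    (blockDiagonal' M).rank = ∑ i, (M i).rank := by
  have h : (blockDiagonal' M).mulVecLin =
      (LinearEquiv.piCurry K fun _ _ => K).symm.toLinearMap ∘ₗ
        LinearMap.piMap (fun i => (M i).mulVecLin) ∘ₗ
          (LinearEquiv.piCurry K fun _ _ => K).toLinearMap := by
    ext v ⟨i, a⟩
    simp [mulVec, dotProduct, Fintype.sum_sigma, blockDiagonal'_apply, Sigma.uncurry, Sigma.curry]
  rw [rank, h, LinearMap.range_comp, LinearMap.range_comp_of_range_eq_top _ (LinearEquiv.range _),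
    LinearEquiv.finrank_map_eq, LinearMap.finrank_range_piMap]
  rfl

theorem Matrix.blockDiagonal'_submatrix_sub_smul_one {R o l : Type*} [CommRing R] [DecidableEq o]
    [DecidableEq l] {m : o → Type*} [∀ i, DecidableEq (m i)] (M : ∀ i, Matrix (m i) (m i) R)
    (e : l ≃ Σ i, m i) (μ : R) :
    (blockDiagonal' M).submatrix e e - μ • 1 =
      (blockDiagonal' fun i => M i - μ • 1).submatrix e e := by
  change _ = (blockDiagonal' (M - μ • 1)).submatrix e e
  rw [blockDiagonal'_sub, blockDiagonal'_smul, blockDiagonal'_one, ← submatrix_one_equiv e]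
  rfl

theorem Matrix.rank_sub_smul_one_of_eq_conj {R n : Type*} [CommRing R] [Fintype n]
    [DecidableEq n] {A B Q : Matrix n n R} (hQ : IsUnit Q.det) (hA : A = Q * B * Q⁻¹) (μ : R) :
    (A - μ • 1).rank = (B - μ • 1).rank := by
  have hconj : A - μ • 1 = Q * (B - μ • 1) * Q⁻¹ := by
    rw [hA, Matrix.mul_sub, Matrix.sub_mul, Matrix.mul_smul, Matrix.mul_one, Matrix.smul_mul,
      mul_nonsing_inv Q hQ]
  rw [hconj, rank_mul_eq_left_of_isUnit_det _ _ (isUnit_nonsing_inv_det Q hQ),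
    rank_mul_eq_right_of_isUnit_det _ _ hQ]

theorem Matrix.rank_lt_card_of_mulVec_eq_zero {K m n : Type*} [Field K] [Fintype n]
    (A : Matrix m n K) {v : n → K} (hv : v ≠ 0) (hAv : A *ᵥ v = 0) :
    A.rank < Fintype.card n := by
  have hker : finrank K (LinearMap.ker A.mulVecLin) ≠ 0 :=
    Submodule.finrank_eq_zero.not.mpr <| (Submodule.ne_bot_iff _).mpr ⟨v, hAv, hv⟩
  have hsum := A.mulVecLin.finrank_range_add_finrank_ker
  rw [finrank_fintype_fun_eq_card] at hsum
  rw [rank]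
  omega

theorem exists_isRoot_of_chain_dvd {F : Type*} [Field F] [IsAlgClosed F] {k : ℕ}
    (f : Fin k → F[X]) (hdeg : ∀ i, 0 < (f i).natDegree)
    (hchain : ∀ i j : Fin k, i ≤ j → f i ∣ f j) :
    ∃ μ, ∀ i, (f i).IsRoot μ := by
  cases k with
  | zero => exact ⟨0, finZeroElim⟩
  | succ k =>
    obtain ⟨μ, hμ⟩ :=
      IsAlgClosed.exists_root (f 0) (natDegree_pos_iff_degree_pos.mp (hdeg 0)).ne'
    exact ⟨μ, fun i => hμ.dvd (hchain 0 i (Fin.zero_le i))⟩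

section Companion

variable {F : Type*} [Field F]

theorem coeff_divByMonic_X_sub_C_natDegree_sub_one {f : F[X]} (hf : f.Monic)
    (hpos : 0 < f.natDegree) (μ : F) : (f /ₘ (X - C μ)).coeff (f.natDegree - 1) = 1 := by
  have hdeg : (X - C μ).degree ≤ f.degree := by
    rw [degree_X_sub_C, degree_eq_natDegree hf.ne_zero]
    exact_mod_cast hpos
  rw [← natDegree_X_sub_C μ, ← natDegree_divByMonic f (monic_X_sub_C μ), coeff_natDegree,
    leadingCoeff_divByMonic_of_monic (monic_X_sub_C μ) hdeg, hf.leadingCoeff]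

-- `companionMatrix f` is multiplication by `X` on `F[X] ⧸ (f)` in the basis `1, X, …, X^(m-1)`.
theorem companionMatrix_mulVec_coeff (f g : F[X]) :
    companionMatrix f *ᵥ (fun j => g.coeff j) =
      fun i => (X * g - C (g.coeff (f.natDegree - 1)) * f).coeff i := by
  ext ⟨i, hi⟩
  simp only [mulVec, dotProduct, companionMatrix, add_mul, Finset.sum_add_distrib, ite_mul,
    one_mul, zero_mul, coeff_sub, coeff_C_mul]
  rw [Fin.sum_univ_eq_sum_range (fun j => if i = j + 1 then g.coeff j else 0),
    Fin.sum_univ_eq_sum_range (fun j => if j = f.natDegree - 1 then -f.coeff i * g.coeff j else 0),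
    Finset.sum_ite_eq' _ _ (fun j => -f.coeff i * g.coeff j),
    if_pos (Finset.mem_range.mpr (by omega))]
  cases i with
  | zero => simp [mul_comm]
  | succ i =>
    simp only [Nat.succ_inj, Finset.sum_ite_eq, Finset.mem_range, coeff_X_mul]
    rw [if_pos (by omega)]
    ring

theorem companionMatrix_sub_smul_mulVec_divByMonic {f : F[X]} (hf : f.Monic) {μ : F}
    (hμ : f.IsRoot μ) :
    (companionMatrix f - μ • 1) *ᵥ (fun j : Fin f.natDegree => (f /ₘ (X - C μ)).coeff j) = 0 := by
  ext i
  set q := f /ₘ (X - C μ)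
  have hq : (X - C μ) * q = f := mul_divByMonic_eq_iff_isRoot.mpr hμ
  rw [sub_mulVec, smul_mulVec, one_mulVec, Pi.sub_apply, companionMatrix_mulVec_coeff,
    coeff_divByMonic_X_sub_C_natDegree_sub_one hf i.pos μ, C_1, one_mul]
  have hzero : X * q - f - C μ * q = 0 := by rw [← hq]; ring
  simpa [coeff_C_mul] using congrArg (coeff · i) hzero

theorem le_rank_companionMatrix_sub_smul (f : F[X]) (μ : F) :
    f.natDegree - 1 ≤ (companionMatrix f - μ • 1).rank := by
  set B := (companionMatrix f - μ • 1).submatrix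
    (fun i : Fin (f.natDegree - 1) => ⟨i + 1, by omega⟩) (Fin.castLE (Nat.sub_le _ 1))
  have hB : ∀ i j, B i j = (if i = j then 1 else 0) - if (i : ℕ) + 1 = j then μ else 0 := by
    intro ⟨i, hi⟩ ⟨j, hj⟩
    simp [B, companionMatrix, one_apply, Fin.ext_iff, hj.ne]
  have hdet : B.det = 1 := by
    rw [det_of_isUpperTriangular fun i j (hji : j < i) => by
      rw [hB, if_neg hji.ne', if_neg (by omega), sub_zero]]
    simp [hB]
  calc f.natDegree - 1 = B.rank := by
        rw [rank_of_det_ne_zero (by simp [hdet]), Fintype.card_fin]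
    _ ≤ _ := rank_submatrix_le _ _ _

theorem rank_companionMatrix_sub_smul_le {f : F[X]} (hf : f.Monic) {μ : F} (hμ : f.IsRoot μ) :
    (companionMatrix f - μ • 1).rank ≤ f.natDegree - 1 := by
  have hpos : 0 < f.natDegree := hf.natDegree_pos.mpr fun h => by simp [h] at hμ
  have hv : (fun j : Fin f.natDegree => (f /ₘ (X - C μ)).coeff j) ≠ 0 := fun h => by
    simpa [coeff_divByMonic_X_sub_C_natDegree_sub_one hf hpos μ] using
      congrFun h ⟨_, Nat.sub_one_lt_of_lt hpos⟩
  have := rank_lt_card_of_mulVec_eq_zero _ hv (companionMatrix_sub_smul_mulVec_divByMonic hf hμ)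
  rw [Fintype.card_fin] at this
  omega

end Companion

/-- For `A` with `k` invariant factors (`k` companion blocks in its rational canonical
form), the minimum over `μ` of `rank (A - μ I)` is exactly `n - k`. -/
theorem stmt_7 {F : Type*} [Field F] [IsAlgClosed F] {n k : ℕ}
    (A : Matrix (Fin n) (Fin n) F)
    (f : Fin k → Polynomial F)
    (hmonic : ∀ i, (f i).Monic)
    (hdeg : ∀ i, 0 < (f i).natDegree)
    (hchain : ∀ i j : Fin k, i ≤ j → f i ∣ f j)
    (e : (Σ i : Fin k, Fin (f i).natDegree) ≃ Fin n)
    (Q : Matrix (Fin n) (Fin n) F) (hQ : IsUnit Q.det)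
    (hA : A = Q * ((Matrix.blockDiagonal' fun i => companionMatrix (f i)).submatrix
        e.symm e.symm) * Q⁻¹) :
    IsLeast {r : ℕ | ∃ μ : F, (A - μ • (1 : Matrix (Fin n) (Fin n) F)).rank = r}
      (n - k) := by
  have hrank : ∀ μ : F, (A - μ • 1).rank = ∑ i, (companionMatrix (f i) - μ • 1).rank :=
    fun μ => by
      rw [rank_sub_smul_one_of_eq_conj hQ hA, blockDiagonal'_submatrix_sub_smul_one,
        rank_submatrix, rank_blockDiagonal']
  have hcount : ∑ i, ((f i).natDegree - 1) = n - k := by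
    rw [Finset.sum_tsub_distrib _ fun i _ => hdeg i, ← Fintype.card_fin n,
      ← Fintype.card_congr e, Fintype.card_sigma]
    simp
  obtain ⟨μ₀, hμ₀⟩ := exists_isRoot_of_chain_dvd f hdeg hchain
  refine ⟨⟨μ₀, ?_⟩, ?_⟩
  · rw [hrank, ← hcount]
    exact le_antisymm
      (Finset.sum_le_sum fun i _ => rank_companionMatrix_sub_smul_le (hmonic i) (hμ₀ i))
      (Finset.sum_le_sum fun i _ => le_rank_companionMatrix_sub_smul (f i) μ₀)
  · rintro r ⟨μ, rfl⟩
    rw [hrank, ← hcount]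
    exact Finset.sum_le_sum fun i _ => le_rank_companionMatrix_sub_smul (f i) μ
end
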